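/- arXiv:1910.13854 — 2 statements merged into one kernel-verified Lean document; each statement's English description precedes it below -/
import Mathlib

section
/- Let u be continuous on the closure of D = (0,1] × (-1,1)^d and satisfy pointwise (∂_t - Δ)u = -u³ + g on (0,1] × (-1,1)^d, where g is bounded. Then for all (t,x) ∈ (0,1] × (-1,1)^d, |u(t,x)| ≤ C max{ 1/min{√t, 1-x_i, 1+x_i (i=1,…,d)}, ‖g‖_∞^{1/3} } for a constant C independent of u and g. -/
open Set Filter Topology

/-- The time derivative `∂ₜ u` of a function on space-time `ℝ × ℝ^d`. -/
noncomputable def timeDeriv {d : ℕ} (u : ℝ × (Fin d → ℝ) → ℝ)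
    (p : ℝ × (Fin d → ℝ)) : ℝ :=
  deriv (fun s => u (s, p.2)) p.1

/-- The spatial Laplacian `Δu` of a function on space-time `ℝ × ℝ^d`. -/
noncomputable def spaceLap {d : ℕ} (u : ℝ × (Fin d → ℝ) → ℝ)
    (p : ℝ × (Fin d → ℝ)) : ℝ :=
  ∑ i : Fin d, iteratedDeriv 2 (fun s => u (p.1, Function.update p.2 i s)) (p.2 i)

lemma cube_superadd {x y : ℝ} (hx : 0 ≤ x) (hy : 0 ≤ y) : x^3 + y^3 ≤ (x+y)^3 := by
  nlinarith [mul_nonneg hx hy, sq_nonneg x, sq_nonneg y, mul_nonneg (mul_nonneg hx hx) hy,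
    mul_nonneg (mul_nonneg hx hy) hy]

lemma sum_cube_le {ι : Type*} [DecidableEq ι] (s : Finset ι) (f : ι → ℝ)
    (hf : ∀ i ∈ s, 0 ≤ f i) :
    ∑ i ∈ s, f i ^ 3 ≤ (∑ i ∈ s, f i) ^ 3 := by
  induction s using Finset.induction with
  | empty => simp
  | insert _ _ hnot ih =>
    rename_i a t
    rw [Finset.sum_insert hnot, Finset.sum_insert hnot]
    have h1 : ∑ i ∈ t, f i ^ 3 ≤ (∑ i ∈ t, f i) ^ 3 :=
      ih (fun i hi => hf i (Finset.mem_insert_of_mem hi))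
    have h2 : (0:ℝ) ≤ ∑ i ∈ t, f i :=
      Finset.sum_nonneg (fun i hi => hf i (Finset.mem_insert_of_mem hi))
    have h3 := cube_superadd (hf a (Finset.mem_insert_self a t)) h2
    linarith

lemma deriv_nonneg_of_left_max {f : ℝ → ℝ} {a c : ℝ} (hf : HasDerivAt f c a)
    (h : ∀ᶠ x in 𝓝[<] a, f x ≤ f a) : 0 ≤ c := by
  have hs : Tendsto (slope f a) (𝓝[<] a) (𝓝 c) :=
    ((hasDerivWithinAt_iff_tendsto_slope.1 (hf.hasDerivWithinAt (s := Iio a))).mono_left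
      (nhdsWithin_mono _ (fun x hx => ⟨hx, ne_of_lt hx⟩)))
  refine ge_of_tendsto hs ?_
  filter_upwards [h, self_mem_nhdsWithin] with x hx hx'
  have hxa : x - a < 0 := sub_neg.2 hx'
  rw [slope_def_field]
  exact div_nonneg_iff.2 (Or.inr ⟨by linarith, hxa.le⟩)

lemma second_deriv_nonpos_of_localmax {f : ℝ → ℝ} {a b c : ℝ} (hac : a < c) (hcb : c < b)
    (hf : ∀ x ∈ Ioo a b, DifferentiableAt ℝ f x)
    (hf' : DifferentiableAt ℝ (deriv f) c)
    (hmax : IsLocalMax f c) : deriv (deriv f) c ≤ 0 := by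
  by_contra hK
  push_neg at hK
  set g := deriv f with hg
  have hgc : g c = 0 := hmax.deriv_eq_zero
  have hslope : Tendsto (slope g c) (𝓝[>] c) (𝓝 (deriv g c)) :=
    (hasDerivAt_iff_tendsto_slope.1 hf'.hasDerivAt).mono_left
      (nhdsWithin_mono _ (fun x hx => ne_of_gt hx))
  have h1 : ∀ᶠ x in 𝓝[>] c, 0 < g x := by
    filter_upwards [hslope.eventually (eventually_gt_nhds hK), self_mem_nhdsWithin]
      with x hx hx'
    rw [slope_def_field, hgc, sub_zero] at hx
    have hxc : 0 < x - c := sub_pos.2 hx'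
    have := mul_pos hx hxc
    rwa [div_mul_cancel₀] at this
    exact ne_of_gt hxc
  have h2 : ∀ᶠ x in 𝓝[>] c, f x ≤ f c := hmax.filter_mono nhdsWithin_le_nhds
  have h3 : ∀ᶠ x in 𝓝[>] c, x < b :=
    eventually_nhdsWithin_of_eventually_nhds (eventually_lt_nhds hcb)
  obtain ⟨v, hv, hsub⟩ :=
    mem_nhdsGT_iff_exists_Ioo_subset.1 (h1.and (h2.and h3) : _ ∈ 𝓝[>] c)
  set z := (c + v) / 2 with hz
  have hcv : c < v := mem_Ioi.1 hv
  have hcz : c < z := by simp only [hz]; linarith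
  have hzv : z < v := by simp only [hz]; linarith
  have hzP := hsub ⟨hcz, hzv⟩
  have hIccsub : Icc c z ⊆ Ioo a b := fun x hx =>
    ⟨lt_of_lt_of_le hac hx.1, lt_of_le_of_lt hx.2 hzP.2.2⟩
  have hmono : StrictMonoOn f (Icc c z) := by
    apply strictMonoOn_of_deriv_pos (convex_Icc c z)
    · exact fun x hx => (hf x (hIccsub hx)).continuousAt.continuousWithinAt
    · intro x hx
      rw [interior_Icc] at hx
      exact (hsub ⟨hx.1, lt_trans hx.2 hzv⟩).1
  have := hmono (left_mem_Icc.2 hcz.le) (right_mem_Icc.2 hcz.le) hcz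
  exact absurd hzP.2.1 (not_le.2 this)

lemma time_deriv_ge {F G : ℝ → ℝ} {x G' : ℝ} (hG : HasDerivAt G G' x) (hG'neg : G' < 0)
    (hmax : ∀ᶠ s in 𝓝[<] x, F s - G s ≤ F x - G x) :
    G' ≤ deriv F x := by
  by_cases hF : DifferentiableAt ℝ F x
  · have hW : HasDerivAt (fun s => F s - G s) (deriv F x - G') x := hF.hasDerivAt.sub hG
    have := deriv_nonneg_of_left_max hW hmax
    linarith
  · rw [deriv_zero_of_not_differentiableAt hF]
    exact hG'neg.le

lemma slice_second_le {F G G' : ℝ → ℝ} {a b x G'' : ℝ} (hax : a < x) (hxb : x < b)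
    (hF : ContDiffOn ℝ 2 F (Ioo a b))
    (hG : ∀ s ∈ Ioo a b, HasDerivAt G (G' s) s)
    (hG'' : HasDerivAt G' G'' x)
    (hmax : IsLocalMax (fun s => F s - G s) x) :
    iteratedDeriv 2 F x ≤ G'' := by
  have hxI : x ∈ Ioo a b := ⟨hax, hxb⟩
  have hnb : Ioo a b ∈ 𝓝 x := isOpen_Ioo.mem_nhds hxI
  have hFd : ∀ s ∈ Ioo a b, DifferentiableAt ℝ F s := fun s hs =>
    ((hF.differentiableOn (by norm_num)).differentiableAt (isOpen_Ioo.mem_nhds hs))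
  have hdF : ContDiffOn ℝ 1 (deriv F) (Ioo a b) :=
    hF.deriv_of_isOpen (m := 1) isOpen_Ioo (by norm_num)
  have hdFx : DifferentiableAt ℝ (deriv F) x :=
    (hdF.differentiableOn one_ne_zero).differentiableAt hnb
  set W := fun s => F s - G s with hWdef
  have hWd : ∀ s ∈ Ioo a b, DifferentiableAt ℝ W s := fun s hs =>
    (hFd s hs).sub (hG s hs).differentiableAt
  have hdW : ∀ s ∈ Ioo a b, deriv W s = deriv F s - G' s := fun s hs =>
    ((hFd s hs).hasDerivAt.sub (hG s hs)).deriv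
  have hdWev : deriv W =ᶠ[𝓝 x] fun s => deriv F s - G' s := by
    filter_upwards [hnb] with s hs using hdW s hs
  have hdWx : DifferentiableAt ℝ (deriv W) x :=
    (Filter.EventuallyEq.differentiableAt_iff hdWev).2 (hdFx.sub hG''.differentiableAt)
  have hkey := second_deriv_nonpos_of_localmax hax hxb hWd hdWx hmax
  have : deriv (deriv W) x = deriv (deriv F) x - G'' := by
    rw [hdWev.deriv_eq, deriv_fun_sub hdFx hG''.differentiableAt, hG''.deriv]
  rw [this] at hkey
  rw [iteratedDeriv_succ, iteratedDeriv_one]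
  linarith

lemma hasDerivAt_timeBarrier {t : ℝ} (ht : 0 < t) :
    HasDerivAt (fun s => 2 * (Real.sqrt s)⁻¹) (-(t * Real.sqrt t)⁻¹) t := by
  have hs : Real.sqrt t ≠ 0 := (Real.sqrt_pos.2 ht).ne'
  have h1 : HasDerivAt Real.sqrt (1 / (2 * Real.sqrt t)) t := Real.hasDerivAt_sqrt ht.ne'
  have h2 := (h1.inv hs).const_mul (2:ℝ)
  refine h2.congr_deriv ?_
  symm
  have h3 : Real.sqrt t ^ 2 = t := Real.sq_sqrt ht.le
  field_simp
  nlinarith [Real.sqrt_pos.2 ht]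

lemma hasDerivAt_spaceBarrier1 {s : ℝ} (h1 : s < 1) (h2 : -1 < s) :
    HasDerivAt (fun y => 2 * ((1 - y)⁻¹ + (1 + y)⁻¹))
      (2 * (((1 - s)^2)⁻¹ - ((1 + s)^2)⁻¹)) s := by
  have ha : (1 : ℝ) - s ≠ 0 := by linarith
  have hb : (1 : ℝ) + s ≠ 0 := by linarith
  have d1 : HasDerivAt (fun y : ℝ => 1 - y) (-1) s := by
    simpa using (hasDerivAt_id s).const_sub 1
  have d2 : HasDerivAt (fun y : ℝ => 1 + y) 1 s := by
    simpa using (hasDerivAt_id s).const_add 1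
  have i1 := d1.inv ha
  have i2 := d2.inv hb
  have := (i1.add i2).const_mul (2:ℝ)
  refine this.congr_deriv ?_
  symm
  field_simp
  ring

lemma hasDerivAt_spaceBarrier2 {s : ℝ} (h1 : s < 1) (h2 : -1 < s) :
    HasDerivAt (fun y => 2 * (((1 - y)^2)⁻¹ - ((1 + y)^2)⁻¹))
      (4 * (((1 - s)⁻¹)^3 + ((1 + s)⁻¹)^3)) s := by
  have ha : (1 : ℝ) - s ≠ 0 := by linarith
  have hb : (1 : ℝ) + s ≠ 0 := by linarith
  have d1 : HasDerivAt (fun y : ℝ => 1 - y) (-1) s := by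
    simpa using (hasDerivAt_id s).const_sub 1
  have d2 : HasDerivAt (fun y : ℝ => 1 + y) 1 s := by
    simpa using (hasDerivAt_id s).const_add 1
  have i1 := ((d1.fun_pow 2).inv (pow_ne_zero 2 ha))
  have i2 := ((d2.fun_pow 2).inv (pow_ne_zero 2 hb))
  have := (i1.sub i2).const_mul (2:ℝ)
  refine this.congr_deriv ?_
  symm
  field_simp
  ring

lemma sum_update_eq {d : ℕ} (x : Fin d → ℝ) (i : Fin d) (s : ℝ) (h : ℝ → ℝ) :
    ∑ j, h (Function.update x i s j) = h s + ∑ j ∈ Finset.univ.erase i, h (x j) := by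
  have heq : (fun j => h (Function.update x i s j)) =
      Function.update (fun j => h (x j)) i (h s) := by
    funext j
    by_cases hji : j = i
    · subst hji; simp
    · simp [Function.update_of_ne hji]
  calc ∑ j, h (Function.update x i s j)
      = ∑ j, Function.update (fun j => h (x j)) i (h s) j := by rw [heq]
    _ = h s + ∑ j ∈ Finset.univ \ {i}, h (x j) :=
        Finset.sum_update_of_mem (Finset.mem_univ i) _ _
    _ = h s + ∑ j ∈ Finset.univ.erase i, h (x j) := by rw [← Finset.erase_eq]

lemma ciInf_pos_of_finite {ι : Type*} [Finite ι] [Nonempty ι] {f : ι → ℝ}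
    (h : ∀ i, 0 < f i) : 0 < ⨅ i, f i := by
  obtain ⟨i₀, hi₀⟩ := Finite.exists_min f
  exact lt_of_lt_of_le (h i₀) (le_ciInf hi₀)

lemma ciInf_le_of_finite {ι : Type*} [Finite ι] [Nonempty ι] (f : ι → ℝ) (i : ι) :
    ⨅ j, f j ≤ f i :=
  ciInf_le (Set.finite_range f).bddBelow i

section Barrier

variable {d : ℕ}

/-- The barrier function. -/
noncomputable def barrier (d : ℕ) (m : ℝ) (p : ℝ × (Fin d → ℝ)) : ℝ :=
  2 * (Real.sqrt p.1)⁻¹ + 2 * ∑ i, ((1 - p.2 i)⁻¹ + (1 + p.2 i)⁻¹) + m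

lemma barrier_pieces_nonneg {m : ℝ} (hm : 0 ≤ m) {z : ℝ × (Fin d → ℝ)}
    (hz1 : 0 ≤ z.1) (hz2 : ∀ i, z.2 i ∈ Icc (-1:ℝ) 1) :
    0 ≤ (Real.sqrt z.1)⁻¹ ∧ (∀ i, (0:ℝ) ≤ (1 - z.2 i)⁻¹ ∧ (0:ℝ) ≤ (1 + z.2 i)⁻¹) := by
  refine ⟨inv_nonneg.2 (Real.sqrt_nonneg _), fun i => ⟨?_, ?_⟩⟩
  · exact inv_nonneg.2 (by linarith [(hz2 i).2])
  · exact inv_nonneg.2 (by linarith [(hz2 i).1])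

lemma barrier_ge_time {m : ℝ} (hm : 0 ≤ m) {z : ℝ × (Fin d → ℝ)}
    (hz1 : 0 ≤ z.1) (hz2 : ∀ i, z.2 i ∈ Icc (-1:ℝ) 1) :
    2 * (Real.sqrt z.1)⁻¹ ≤ barrier d m z := by
  obtain ⟨h0, hi⟩ := barrier_pieces_nonneg hm hz1 hz2
  have : (0:ℝ) ≤ ∑ i, ((1 - z.2 i)⁻¹ + (1 + z.2 i)⁻¹) :=
    Finset.sum_nonneg (fun i _ => by linarith [(hi i).1, (hi i).2])
  unfold barrier; linarith

lemma barrier_ge_space {m : ℝ} (hm : 0 ≤ m) {z : ℝ × (Fin d → ℝ)}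
    (hz1 : 0 ≤ z.1) (hz2 : ∀ i, z.2 i ∈ Icc (-1:ℝ) 1) (i : Fin d) :
    2 * ((1 - z.2 i)⁻¹ + (1 + z.2 i)⁻¹) ≤ barrier d m z := by
  obtain ⟨h0, hi⟩ := barrier_pieces_nonneg hm hz1 hz2
  have hle : ((1 - z.2 i)⁻¹ + (1 + z.2 i)⁻¹) ≤ ∑ j, ((1 - z.2 j)⁻¹ + (1 + z.2 j)⁻¹) :=
    Finset.single_le_sum (f := fun j => ((1 - z.2 j)⁻¹ + (1 + z.2 j)⁻¹))
      (fun j _ => by linarith [(hi j).1, (hi j).2]) (Finset.mem_univ i)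
  unfold barrier; linarith

lemma barrier_nonneg {m : ℝ} (hm : 0 ≤ m) {z : ℝ × (Fin d → ℝ)}
    (hz1 : 0 ≤ z.1) (hz2 : ∀ i, z.2 i ∈ Icc (-1:ℝ) 1) :
    0 ≤ barrier d m z := by
  have := barrier_ge_time hm hz1 hz2
  have h0 : 0 ≤ (Real.sqrt z.1)⁻¹ := inv_nonneg.2 (Real.sqrt_nonneg _)
  linarith

end Barrier

lemma upper_bound (d : ℕ) [NeZero d] (u g : ℝ × (Fin d → ℝ) → ℝ) (M : ℝ)
    (hM : 0 ≤ M)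
    (hu_cont : ContinuousOn u
      {p : ℝ × (Fin d → ℝ) | p.1 ∈ Icc (0:ℝ) 1 ∧ ∀ i, p.2 i ∈ Icc (-1:ℝ) 1})
    (hu_smooth : ContDiffOn ℝ 2 u
      {p : ℝ × (Fin d → ℝ) | p.1 ∈ Ioc (0:ℝ) 1 ∧ ∀ i, p.2 i ∈ Ioo (-1:ℝ) 1})
    (hpde : ∀ p : ℝ × (Fin d → ℝ), p.1 ∈ Ioc (0:ℝ) 1 → (∀ i, p.2 i ∈ Ioo (-1:ℝ) 1) →
      timeDeriv u p - spaceLap u p = -(u p) ^ 3 + g p)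
    (hg : ∀ p : ℝ × (Fin d → ℝ), p.1 ∈ Ioc (0:ℝ) 1 → (∀ i, p.2 i ∈ Ioo (-1:ℝ) 1) → |g p| ≤ M) :
    ∀ p : ℝ × (Fin d → ℝ), p.1 ∈ Ioc (0:ℝ) 1 → (∀ i, p.2 i ∈ Ioo (-1:ℝ) 1) →
      u p ≤ barrier d (M ^ ((1:ℝ)/3)) p := by
  classical
  set m := M ^ ((1:ℝ)/3) with hmdef
  have hm : 0 ≤ m := Real.rpow_nonneg hM _
  have hm3 : m ^ 3 = M := by
    rw [hmdef, ← Real.rpow_natCast (M ^ ((1:ℝ)/3)) 3, ← Real.rpow_mul hM]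
    norm_num
  set V := barrier d m with hVdef
  by_contra hcon
  push_neg at hcon
  obtain ⟨p, hp1, hp2, hup⟩ := hcon
  -- Interior set and closed set inclusions
  set S := {z : ℝ × (Fin d → ℝ) | z.1 ∈ Ioc (0:ℝ) 1 ∧ ∀ i, z.2 i ∈ Ioo (-1:ℝ) 1} with hSdef
  set Scl := {z : ℝ × (Fin d → ℝ) | z.1 ∈ Icc (0:ℝ) 1 ∧ ∀ i, z.2 i ∈ Icc (-1:ℝ) 1} with hScldef
  have hSsub : S ⊆ Scl := by
    intro z hz
    exact ⟨⟨hz.1.1.le, hz.1.2⟩, fun i => ⟨(hz.2 i).1.le, (hz.2 i).2.le⟩⟩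
  -- bound for u
  have hScl_cpt : IsCompact Scl := by
    have : Scl = (Icc (0:ℝ) 1) ×ˢ (Set.pi univ fun _ : Fin d => Icc (-1:ℝ) 1) := by
      ext z
      constructor
      · rintro ⟨h1, h2⟩; exact ⟨h1, fun i _ => h2 i⟩
      · rintro ⟨h1, h2⟩; exact ⟨h1, fun i => h2 i (mem_univ i)⟩
    rw [this]
    exact isCompact_Icc.prod (isCompact_univ_pi fun _ => isCompact_Icc)
  obtain ⟨B, hB⟩ := hScl_cpt.exists_bound_of_continuousOn hu_cont
  set B1 := max B 1 with hB1def
  have hB1 : 1 ≤ B1 := le_max_right _ _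
  have hB1pos : 0 < B1 := lt_of_lt_of_le one_pos hB1
  have huB : ∀ z ∈ Scl, |u z| ≤ B1 := fun z hz => le_trans (hB z hz) (le_max_left _ _)
  -- choice of δ
  have hItop : 0 < ⨅ i, min (1 - p.2 i) (1 + p.2 i) :=
    ciInf_pos_of_finite (fun i => lt_min (by linarith [(hp2 i).2]) (by linarith [(hp2 i).1]))
  set δ := min (1/B1^2) (min p.1 (⨅ i, min (1 - p.2 i) (1 + p.2 i))) with hδdef
  have hδpos : 0 < δ :=
    lt_min (by positivity) (lt_min hp1.1 hItop)
  have hδ1 : δ ≤ 1/B1^2 := min_le_left _ _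
  have hδp1 : δ ≤ p.1 := le_trans (min_le_right _ _) (min_le_left _ _)
  have hδpi : ∀ i, δ ≤ 1 - p.2 i ∧ δ ≤ 1 + p.2 i := by
    intro i
    have h1 : δ ≤ ⨅ i, min (1 - p.2 i) (1 + p.2 i) :=
      le_trans (min_le_right _ _) (min_le_right _ _)
    have h2 := le_trans h1 (ciInf_le_of_finite _ i)
    exact ⟨le_trans h2 (min_le_left _ _), le_trans h2 (min_le_right _ _)⟩
  -- the compact set K
  set K := (Icc δ 1) ×ˢ (Set.pi univ fun _ : Fin d => Icc (-(1-δ)) (1-δ)) with hKdef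
  have hKS : K ⊆ S := by
    rintro z ⟨hz1, hz2⟩
    refine ⟨⟨lt_of_lt_of_le hδpos hz1.1, hz1.2⟩, fun i => ?_⟩
    have h := hz2 i (mem_univ i)
    simp only [mem_Icc] at h
    simp only [mem_Ioo]
    constructor
    · linarith [h.1]
    · linarith [h.2]
  have hpK : p ∈ K := by
    refine ⟨⟨hδp1, hp1.2⟩, fun i _ => ?_⟩
    have h := hδpi i
    simp only [mem_Icc]
    constructor
    · linarith [h.2]
    · linarith [h.1]
  have hK_cpt : IsCompact K :=
    isCompact_Icc.prod (isCompact_univ_pi fun _ => isCompact_Icc)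
  -- continuity of w on K
  have hVcont : ContinuousOn V K := by
    have c1 : ContinuousOn (fun z : ℝ × (Fin d → ℝ) => (Real.sqrt z.1)⁻¹) K := by
      apply ContinuousOn.inv₀
      · exact (Real.continuous_sqrt.comp continuous_fst).continuousOn
      · intro z hz
        have : 0 < z.1 := lt_of_lt_of_le hδpos hz.1.1
        exact (Real.sqrt_pos.2 this).ne'
    have c2 : ContinuousOn
        (fun z : ℝ × (Fin d → ℝ) => ∑ i, ((1 - z.2 i)⁻¹ + (1 + z.2 i)⁻¹)) K := by
      apply continuousOn_finset_sum
      intro i _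
      have hcoord : Continuous (fun z : ℝ × (Fin d → ℝ) => z.2 i) :=
        (continuous_apply i).comp continuous_snd
      apply ContinuousOn.add
      · apply ContinuousOn.inv₀ ((continuous_const.sub hcoord).continuousOn)
        intro z hz
        have := hz.2 i (mem_univ i)
        simp only [mem_Icc] at this
        have : z.2 i ≤ 1 - δ := this.2
        have : (0:ℝ) < 1 - z.2 i := by linarith
        exact this.ne'
      · apply ContinuousOn.inv₀ ((continuous_const.add hcoord).continuousOn)
        intro z hz
        have := hz.2 i (mem_univ i)
        simp only [mem_Icc] at this
        have : -(1 - δ) ≤ z.2 i := this.1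
        have : (0:ℝ) < 1 + z.2 i := by linarith
        exact this.ne'
    exact ((c1.const_smul (2:ℝ)).add (c2.const_smul (2:ℝ))).add continuousOn_const
  have hwcont : ContinuousOn (fun z => u z - V z) K :=
    (hu_cont.mono (le_trans hKS hSsub)).sub hVcont
  -- maximum point
  obtain ⟨q, hqK, hqmax⟩ := hK_cpt.exists_isMaxOn ⟨p, hpK⟩ hwcont
  have hqS : q ∈ S := hKS hqK
  have hq1 : q.1 ∈ Ioc (0:ℝ) 1 := hqS.1
  have hq2 : ∀ i, q.2 i ∈ Ioo (-1:ℝ) 1 := hqS.2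
  have hqmax' : ∀ z ∈ K, u z - V z ≤ u q - V q := hqmax
  have hwp : 0 < u p - V p := by linarith
  have hwq : 0 < u q - V q := lt_of_lt_of_le hwp (hqmax' p hpK)
  -- global maximality over S
  have hglob : ∀ z ∈ S, u z - V z ≤ u q - V q := by
    intro z hz
    by_cases hzK : z ∈ K
    · exact hqmax' z hzK
    -- z outside K: the barrier is large
    have hVlarge : B1 < V z := by
      have hz1 := hz.1
      have hz2 := hz.2
      have hIcc : ∀ i, z.2 i ∈ Icc (-1:ℝ) 1 := fun i => ⟨(hz2 i).1.le, (hz2 i).2.le⟩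
      rw [hKdef] at hzK
      simp only [Set.mem_prod, Set.mem_pi, mem_univ, forall_true_left, not_and_or,
        mem_Icc, not_forall, not_and, not_le] at hzK
      rcases hzK with h | h
      · -- time coordinate small
        have hzδ : z.1 < δ := by
          rcases h with h' | h'
          · exact h'
          · linarith [hz1.2]
        have hsq : Real.sqrt z.1 < Real.sqrt δ := by
          apply Real.sqrt_lt_sqrt hz1.1.le hzδ
        have hsqδ : Real.sqrt δ ≤ 1 / B1 := by
          rw [show (1:ℝ)/B1 = Real.sqrt ((1/B1)^2) by
            rw [Real.sqrt_sq (by positivity)]]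
          apply Real.sqrt_le_sqrt
          calc δ ≤ 1/B1^2 := hδ1
            _ = (1/B1)^2 := by ring
        have hpos : 0 < Real.sqrt z.1 := Real.sqrt_pos.2 hz1.1
        have h1B : B1 < (Real.sqrt z.1)⁻¹ := by
          have h2 : Real.sqrt z.1 < 1 / B1 := lt_of_lt_of_le hsq hsqδ
          calc B1 = (1/B1)⁻¹ := by field_simp
            _ < (Real.sqrt z.1)⁻¹ := by
                apply inv_strictAnti₀ hpos h2
        have := barrier_ge_time (d := d) hm hz1.1.le hIcc
        have h2inv : (Real.sqrt z.1)⁻¹ ≤ 2 * (Real.sqrt z.1)⁻¹ := by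
          have : 0 ≤ (Real.sqrt z.1)⁻¹ := by positivity
          linarith
        calc B1 < (Real.sqrt z.1)⁻¹ := h1B
          _ ≤ 2 * (Real.sqrt z.1)⁻¹ := h2inv
          _ ≤ V z := this
      · -- a space coordinate near the boundary
        obtain ⟨i, hi⟩ := h
        have hb := barrier_ge_space (d := d) hm hz1.1.le hIcc i
        have hnn := barrier_pieces_nonneg (d := d) hm hz1.1.le hIcc
        have hδB1 : δ ≤ 1/B1 := by
          calc δ ≤ 1/B1^2 := hδ1
            _ ≤ 1/B1 := one_div_le_one_div_of_le hB1pos (by nlinarith)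
        rcases hi with h' | h'
        · -- z.2 i < -(1-δ), so 1 + z.2 i < δ
          have h'' : z.2 i < -(1-δ) := h'
          have hsmall : 1 + z.2 i < δ := by linarith
          have hposz : 0 < 1 + z.2 i := by linarith [(hz2 i).1]
          have h1B : B1 < (1 + z.2 i)⁻¹ := by
            have h2 : 1 + z.2 i < 1 / B1 := lt_of_lt_of_le hsmall hδB1
            calc B1 = (1/B1)⁻¹ := by field_simp
              _ < (1 + z.2 i)⁻¹ := inv_strictAnti₀ hposz h2
          calc B1 < (1 + z.2 i)⁻¹ := h1B
            _ ≤ 2 * ((1 - z.2 i)⁻¹ + (1 + z.2 i)⁻¹) := by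
                linarith [(hnn.2 i).1, (hnn.2 i).2]
            _ ≤ V z := hb
        · -- z.2 i > 1-δ, so 1 - z.2 i < δ
          have h'' : 1 - δ < z.2 i := h'
          have hsmall : 1 - z.2 i < δ := by linarith
          have hposz : 0 < 1 - z.2 i := by linarith [(hz2 i).2]
          have h1B : B1 < (1 - z.2 i)⁻¹ := by
            have h2 : 1 - z.2 i < 1 / B1 := lt_of_lt_of_le hsmall hδB1
            calc B1 = (1/B1)⁻¹ := by field_simp
              _ < (1 - z.2 i)⁻¹ := inv_strictAnti₀ hposz h2
          calc B1 < (1 - z.2 i)⁻¹ := h1B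
            _ ≤ 2 * ((1 - z.2 i)⁻¹ + (1 + z.2 i)⁻¹) := by
                linarith [(hnn.2 i).1, (hnn.2 i).2]
            _ ≤ V z := hb
    have huz : |u z| ≤ B1 := huB z (hSsub hz)
    have : u z - V z < 0 := by
      have := abs_le.1 huz
      linarith [this.2]
    linarith
  -- time derivative inequality at q
  have ht0 : 0 < q.1 := hq1.1
  have htd : -(q.1 * Real.sqrt q.1)⁻¹ ≤ timeDeriv u q := by
    have hneg : -(q.1 * Real.sqrt q.1)⁻¹ < 0 := by
      have : 0 < q.1 * Real.sqrt q.1 := mul_pos ht0 (Real.sqrt_pos.2 ht0)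
      simp only [neg_neg, neg_lt, neg_zero]
      positivity
    apply time_deriv_ge (hasDerivAt_timeBarrier ht0) hneg
    filter_upwards [Ioo_mem_nhdsLT_of_mem (show q.1 ∈ Ioc (0:ℝ) q.1 from ⟨ht0, le_rfl⟩)]
      with s hs
    have hzS : ((s, q.2) : ℝ × (Fin d → ℝ)) ∈ S :=
      ⟨⟨hs.1, le_trans hs.2.le hq1.2⟩, hq2⟩
    have h1 := hglob _ hzS
    have hVz : V (s, q.2) = 2 * (Real.sqrt s)⁻¹ +
        (2 * ∑ i, ((1 - q.2 i)⁻¹ + (1 + q.2 i)⁻¹) + m) := by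
      simp only [hVdef, barrier]; ring
    have hVq : V q = 2 * (Real.sqrt q.1)⁻¹ +
        (2 * ∑ i, ((1 - q.2 i)⁻¹ + (1 + q.2 i)⁻¹) + m) := by
      simp only [hVdef, barrier]; ring
    have hq_eta : ((q.1, q.2) : ℝ × (Fin d → ℝ)) = q := Prod.mk.eta
    rw [hVz, hVq] at h1
    have h2 : u (q.1, q.2) = u q := by rw [hq_eta]
    simp only [h2] at *
    linarith
  -- space second derivative inequalities at q
  have hsp : ∀ i : Fin d, iteratedDeriv 2 (fun s => u (q.1, Function.update q.2 i s)) (q.2 i)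
      ≤ 4 * (((1 - q.2 i)⁻¹)^3 + ((1 + q.2 i)⁻¹)^3) := by
    intro i
    have hxi := hq2 i
    have hφ : ContDiff ℝ 2 (fun s : ℝ => ((q.1, Function.update q.2 i s) : ℝ × (Fin d → ℝ))) :=
      contDiff_const.prodMk (contDiff_update 2 q.2 i)
    have hmaps : ∀ s ∈ Ioo (-1:ℝ) 1,
        ((q.1, Function.update q.2 i s) : ℝ × (Fin d → ℝ)) ∈ S := by
      intro s hs
      refine ⟨hq1, fun j => ?_⟩
      by_cases hji : j = i
      · subst hji; simpa using hs
      · simpa [Function.update_of_ne hji] using hq2 j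
    have hF : ContDiffOn ℝ 2 (fun s => u (q.1, Function.update q.2 i s)) (Ioo (-1:ℝ) 1) :=
      hu_smooth.comp (hφ.contDiffOn) hmaps
    refine slice_second_le (G := fun y => 2 * ((1 - y)⁻¹ + (1 + y)⁻¹))
      (G' := fun y => 2 * (((1 - y)^2)⁻¹ - ((1 + y)^2)⁻¹))
      hxi.1 hxi.2 hF (fun s hs => hasDerivAt_spaceBarrier1 hs.2 hs.1)
      (hasDerivAt_spaceBarrier2 hxi.2 hxi.1) ?_
    -- local max
    have hnb : Ioo (-1:ℝ) 1 ∈ 𝓝 (q.2 i) := isOpen_Ioo.mem_nhds hxi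
    filter_upwards [hnb] with s hs
    have hzS := hmaps s hs
    have h1 := hglob _ hzS
    have hsum1 : ∑ j, ((1 - Function.update q.2 i s j)⁻¹ + (1 + Function.update q.2 i s j)⁻¹)
        = ((1 - s)⁻¹ + (1 + s)⁻¹) +
          ∑ j ∈ Finset.univ.erase i, ((1 - q.2 j)⁻¹ + (1 + q.2 j)⁻¹) :=
      sum_update_eq q.2 i s (fun y => (1 - y)⁻¹ + (1 + y)⁻¹)
    have hsum2 : ∑ j, ((1 - q.2 j)⁻¹ + (1 + q.2 j)⁻¹)
        = ((1 - q.2 i)⁻¹ + (1 + q.2 i)⁻¹) +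
          ∑ j ∈ Finset.univ.erase i, ((1 - q.2 j)⁻¹ + (1 + q.2 j)⁻¹) := by
      have := sum_update_eq q.2 i (q.2 i) (fun y => (1 - y)⁻¹ + (1 + y)⁻¹)
      rwa [Function.update_eq_self] at this
    have hVz : V (q.1, Function.update q.2 i s) = 2 * (Real.sqrt q.1)⁻¹ +
        2 * (((1 - s)⁻¹ + (1 + s)⁻¹) +
          ∑ j ∈ Finset.univ.erase i, ((1 - q.2 j)⁻¹ + (1 + q.2 j)⁻¹)) + m := by
      simp only [hVdef, barrier]
      rw [hsum1]
    have hVq : V q = 2 * (Real.sqrt q.1)⁻¹ +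
        2 * (((1 - q.2 i)⁻¹ + (1 + q.2 i)⁻¹) +
          ∑ j ∈ Finset.univ.erase i, ((1 - q.2 j)⁻¹ + (1 + q.2 j)⁻¹)) + m := by
      simp only [hVdef, barrier]
      rw [hsum2]
    have hueq : u (q.1, Function.update q.2 i (q.2 i)) = u q := by
      rw [Function.update_eq_self, Prod.mk.eta]
    simp only [Function.update_eq_self, Prod.mk.eta] at *
    rw [hVz, hVq] at h1
    linarith
  -- assemble
  have hb : ∀ i : Fin d, (0:ℝ) < (1 - q.2 i)⁻¹ ∧ (0:ℝ) < (1 + q.2 i)⁻¹ := by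
    intro i
    have hxi := hq2 i
    exact ⟨inv_pos.2 (by linarith [hxi.2]), inv_pos.2 (by linarith [hxi.1])⟩
  set Sum3 := ∑ i : Fin d, (((1 - q.2 i)⁻¹)^3 + ((1 + q.2 i)⁻¹)^3) with hSum3def
  have hSum3nn : 0 ≤ Sum3 :=
    Finset.sum_nonneg (fun i _ => by
      have h := hb i
      have h1 := pow_nonneg h.1.le 3
      have h2 := pow_nonneg h.2.le 3
      linarith)
  have hsL : spaceLap u q ≤ 4 * Sum3 := by
    rw [hSum3def, Finset.mul_sum]
    exact Finset.sum_le_sum (fun i _ => hsp i)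
  have hPDE := hpde q hq1 hq2
  have hgq : g q ≤ M := (abs_le.1 (hg q hq1 hq2)).2
  set a := (Real.sqrt q.1)⁻¹ with hadef
  have ha : 0 < a := inv_pos.2 (Real.sqrt_pos.2 ht0)
  have hacube : a^3 = (q.1 * Real.sqrt q.1)⁻¹ := by
    rw [hadef, inv_pow]
    congr 1
    rw [pow_succ, Real.sq_sqrt ht0.le]
  -- upper estimate from PDE
  have h_up : -a^3 - 4 * Sum3 ≤ -(u q)^3 + M := by
    have h1 : -a^3 - 4 * Sum3 ≤ timeDeriv u q - spaceLap u q := by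
      rw [hacube]
      linarith
    rw [hPDE] at h1
    linarith
  -- cube bound for V q
  set SumBC := ∑ i : Fin d, ((1 - q.2 i)⁻¹ + (1 + q.2 i)⁻¹) with hSumBCdef
  have hSumBCnn : 0 ≤ SumBC :=
    Finset.sum_nonneg (fun i _ => by linarith [(hb i).1, (hb i).2])
  have hVqval : V q = 2*a + 2*SumBC + m := by
    simp only [hVdef, barrier, hadef, hSumBCdef]
  have hsumcube : Sum3 ≤ SumBC^3 := by
    calc Sum3 ≤ ∑ i : Fin d, ((1 - q.2 i)⁻¹ + (1 + q.2 i)⁻¹)^3 :=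
          Finset.sum_le_sum (fun i _ => cube_superadd (hb i).1.le (hb i).2.le)
      _ ≤ SumBC^3 := sum_cube_le _ _ (fun i _ => by linarith [(hb i).1, (hb i).2])
  have hVcube : 8*a^3 + 8*Sum3 + M ≤ (V q)^3 := by
    have s1 : (2*a)^3 + (2*SumBC)^3 ≤ (2*a + 2*SumBC)^3 :=
      cube_superadd (by linarith) (by linarith)
    have s2 : (2*a + 2*SumBC)^3 + m^3 ≤ (2*a + 2*SumBC + m)^3 :=
      cube_superadd (by linarith) hm
    have e1 : (2*a)^3 = 8*a^3 := by ring
    have e2 : (2*SumBC)^3 = 8*SumBC^3 := by ring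
    rw [hVqval]
    nlinarith [hsumcube]
  have hVq0 : 0 ≤ V q := by
    rw [hVqval]; linarith
  have huq : V q < u q := by linarith
  have hucube : (V q)^3 < (u q)^3 :=
    pow_lt_pow_left₀ huq hVq0 (by norm_num)
  have ha3 : 0 < a^3 := pow_pos ha 3
  linarith

/-- maximum-principle bound for `(∂ₜ - Δ)u = -u³ + g` on the
parabolic cylinder `(0,1] × (-1,1)^d`: there is a constant `C`, independent of
`u` and `g`, such that
`|u(t,x)| ≤ C max{ 1/min{√t, 1-xᵢ, 1+xᵢ}, ‖g‖_∞^{1/3} }`. -/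
theorem cube_damping_max_principle (d : ℕ) [NeZero d] :
    ∃ C : ℝ, 0 < C ∧
      ∀ (u g : ℝ × (Fin d → ℝ) → ℝ) (M : ℝ),
        ContinuousOn u
          {p : ℝ × (Fin d → ℝ) |
            p.1 ∈ Icc (0 : ℝ) 1 ∧ ∀ i, p.2 i ∈ Icc (-1 : ℝ) 1} →
        ContDiffOn ℝ 2 u
          {p : ℝ × (Fin d → ℝ) |
            p.1 ∈ Ioc (0 : ℝ) 1 ∧ ∀ i, p.2 i ∈ Ioo (-1 : ℝ) 1} →
        (∀ p : ℝ × (Fin d → ℝ),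
          p.1 ∈ Ioc (0 : ℝ) 1 → (∀ i, p.2 i ∈ Ioo (-1 : ℝ) 1) →
          timeDeriv u p - spaceLap u p = -(u p) ^ 3 + g p) →
        (∀ p : ℝ × (Fin d → ℝ),
          p.1 ∈ Ioc (0 : ℝ) 1 → (∀ i, p.2 i ∈ Ioo (-1 : ℝ) 1) → |g p| ≤ M) →
        ∀ p : ℝ × (Fin d → ℝ),
          p.1 ∈ Ioc (0 : ℝ) 1 → (∀ i, p.2 i ∈ Ioo (-1 : ℝ) 1) →
          |u p| ≤ C * max
            (1 / min (Real.sqrt p.1) (⨅ i : Fin d, min (1 - p.2 i) (1 + p.2 i)))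
            (M ^ ((1 : ℝ) / 3)) := by
  haveI : Nonempty (Fin d) := Fin.pos_iff_nonempty.1 (Nat.pos_of_ne_zero (NeZero.ne d))
  refine ⟨4*d+3, by positivity, ?_⟩
  intro u g M hu_cont hu_smooth hpde hg p hp1 hp2
  have hM : 0 ≤ M := le_trans (abs_nonneg _) (hg p hp1 hp2)
  set m := M ^ ((1:ℝ)/3) with hmdef
  have hm : 0 ≤ m := Real.rpow_nonneg hM _
  -- upper bound for u
  have hup : u p ≤ barrier d m p :=
    upper_bound d u g M hM hu_cont hu_smooth hpde hg p hp1 hp2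
  -- lower bound via -u
  have hlow : -u p ≤ barrier d m p := by
    have hpde' : ∀ z : ℝ × (Fin d → ℝ), z.1 ∈ Ioc (0:ℝ) 1 → (∀ i, z.2 i ∈ Ioo (-1:ℝ) 1) →
        timeDeriv (fun w => -u w) z - spaceLap (fun w => -u w) z
          = -((fun w => -u w) z) ^ 3 + (fun w => -g w) z := by
      intro z hz1 hz2
      have e1 : timeDeriv (fun w => -u w) z = -timeDeriv u z := by
        simp only [timeDeriv]
        exact deriv.neg
      have e2 : spaceLap (fun w => -u w) z = -spaceLap u z := by
        simp only [spaceLap, iteratedDeriv_neg, iteratedDeriv_fun_neg, ← Finset.sum_neg_distrib]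
      have h := hpde z hz1 hz2
      rw [e1, e2]
      ring_nf
      ring_nf at h
      linarith
    have hg' : ∀ z : ℝ × (Fin d → ℝ), z.1 ∈ Ioc (0:ℝ) 1 → (∀ i, z.2 i ∈ Ioo (-1:ℝ) 1) →
        |(fun w => -g w) z| ≤ M := by
      intro z hz1 hz2
      simpa [abs_neg] using hg z hz1 hz2
    exact upper_bound d (fun w => -u w) (fun w => -g w) M hM hu_cont.neg hu_smooth.neg
      hpde' hg' p hp1 hp2
  have habs : |u p| ≤ barrier d m p := abs_le.2 ⟨by linarith, hup⟩
  -- compare barrier with the stated bound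
  set r := min (Real.sqrt p.1) (⨅ i : Fin d, min (1 - p.2 i) (1 + p.2 i)) with hrdef
  have hsq : 0 < Real.sqrt p.1 := Real.sqrt_pos.2 hp1.1
  have hinf : 0 < ⨅ i : Fin d, min (1 - p.2 i) (1 + p.2 i) :=
    ciInf_pos_of_finite (fun i => lt_min (by linarith [(hp2 i).2]) (by linarith [(hp2 i).1]))
  have hr0 : 0 < r := lt_min hsq hinf
  set X := max (1 / r) m with hXdef
  have hX1 : 1 / r ≤ X := le_max_left _ _
  have hX2 : m ≤ X := le_max_right _ _
  have hX0 : 0 ≤ X := le_trans (by positivity) hX1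
  have hbound1 : (Real.sqrt p.1)⁻¹ ≤ 1 / r := by
    rw [inv_eq_one_div]
    exact one_div_le_one_div_of_le hr0 (min_le_left _ _)
  have hbound2 : ∀ i : Fin d, (1 - p.2 i)⁻¹ ≤ 1 / r ∧ (1 + p.2 i)⁻¹ ≤ 1 / r := by
    intro i
    have h1 : r ≤ min (1 - p.2 i) (1 + p.2 i) :=
      le_trans (min_le_right _ _) (ciInf_le_of_finite _ i)
    constructor
    · rw [inv_eq_one_div]
      exact one_div_le_one_div_of_le hr0 (le_trans h1 (min_le_left _ _))
    · rw [inv_eq_one_div]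
      exact one_div_le_one_div_of_le hr0 (le_trans h1 (min_le_right _ _))
  have hsum : ∑ i : Fin d, ((1 - p.2 i)⁻¹ + (1 + p.2 i)⁻¹) ≤ (d:ℝ) * (2 * (1/r)) := by
    calc ∑ i : Fin d, ((1 - p.2 i)⁻¹ + (1 + p.2 i)⁻¹)
        ≤ ∑ _i : Fin d, (2 * (1/r)) :=
          Finset.sum_le_sum (fun i _ => by linarith [(hbound2 i).1, (hbound2 i).2])
      _ = (d:ℝ) * (2 * (1/r)) := by
          rw [Finset.sum_const, Finset.card_univ, Fintype.card_fin, nsmul_eq_mul]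
  have hbarrier : barrier d m p ≤ (4*(d:ℝ)+2) * (1/r) + m := by
    unfold barrier
    have := hbound1
    linarith [hsum]
  have hfinal : (4*(d:ℝ)+2) * (1/r) + m ≤ (4*(d:ℝ)+3) * X := by
    have hd0 : (0:ℝ) ≤ 4*(d:ℝ)+2 := by positivity
    have h1 : (4*(d:ℝ)+2) * (1/r) ≤ (4*(d:ℝ)+2) * X :=
      mul_le_mul_of_nonneg_left hX1 hd0
    nlinarith
  calc |u p| ≤ barrier d m p := habs
    _ ≤ (4*(d:ℝ)+2) * (1/r) + m := hbarrier
    _ ≤ (4*(d:ℝ)+3) * X := hfinal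
    _ = (4*(d:ℝ)+3) * max (1 / min (Real.sqrt p.1)
          (⨅ i : Fin d, min (1 - p.2 i) (1 + p.2 i))) (M ^ ((1:ℝ)/3)) := by
        rw [hXdef, hrdef, hmdef]
end

section
/- (Interior derivative bound from Hölder control) Assume D ⊂ ℝ × ℝ^d satisfies a spatial interior cone condition with parameters r₀ > 0 and β ∈ (0,1): for all r ∈ [0, r₀], all x ∈ D, and any vector θ ∈ ℝ^d, there exists y ∈ D with d(x,y) = r and |θ·(y-x)_spatial| ≥ β d(x,y) |θ|. Let κ > 1 and U be a two-variable function on D × D with finite seminorm [U]_{κ,D} := sup_{z∈D} inf_{ν(z)∈ℝ^d} sup_{z̄∈D} |U(z̄,z) - ν(z)·(x - x̄)| / d(z,z̄)^κ. Then for the optimal ν and all r ∈ [0, r₀], β ‖ν‖_D ≤ r^{κ-1}[U]_{κ,D} + r^{-1}‖U‖_{D,r}, where ‖U‖_{D,r} = sup{|U(z̄,z)| : z,z̄ ∈ D, d(z,z̄) ≤ r}. -/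
/-! Apply the cone condition at scale `r` in the direction `θ = ν(z)`: it gives `y ∈ D` with
`d(z,y) = r` and `β r |ν(z)| ≤ |ν(z)·(y - z)|`. Comparing `ν(z)·(x_z - x_y)` with `U(y,z)` bounds
the right side by `K_U r^κ + ‖U‖_{D,r}`, and dividing by `r` gives the claim. -/

/-- The parabolic metric `d((t,x),(s,y)) = max{√|t-s|, |x-y|_∞}` on `ℝ × ℝ^d`
(the norm on `Fin d → ℝ` is the supremum norm). -/
noncomputable def pdist {d : ℕ} (z w : ℝ × (Fin d → ℝ)) : ℝ :=
  max (Real.sqrt |z.1 - w.1|) ‖z.2 - w.2‖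

/-- Euclidean norm of a spatial vector. -/
noncomputable def enorm {d : ℕ} (v : Fin d → ℝ) : ℝ :=
  Real.sqrt (∑ i, v i ^ 2)

/-- Euclidean inner product of spatial vectors. -/
def dotp {d : ℕ} (v w : Fin d → ℝ) : ℝ := ∑ i, v i * w i

lemma dotp_sub_swap {d : ℕ} (v a b : Fin d → ℝ) : dotp v (a - b) = -dotp v (b - a) := by
  simp only [dotp, Pi.sub_apply, ← Finset.sum_neg_distrib]
  exact Finset.sum_congr rfl fun i _ => by ring

lemma abs_dotp_le_of_abs_sub_le {d : ℕ} {ν a b : Fin d → ℝ} {u ε N : ℝ}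
    (happrox : |u - dotp ν (a - b)| ≤ ε) (hu : |u| ≤ N) :
    |dotp ν (b - a)| ≤ ε + N := by
  rw [dotp_sub_swap, sub_neg_eq_add] at happrox
  calc |dotp ν (b - a)| = |(u + dotp ν (b - a)) - u| := by rw [add_sub_cancel_left]
    _ ≤ |u + dotp ν (b - a)| + |u| := abs_sub _ _
    _ ≤ ε + N := add_le_add happrox hu

lemma le_rpow_sub_one_mul_add_inv_mul_of_mul_le {a r κ K N : ℝ} (hr : 0 < r)
    (h : r * a ≤ K * r ^ κ + N) : a ≤ r ^ (κ - 1) * K + r⁻¹ * N :=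
  calc a = r⁻¹ * (r * a) := by field_simp
    _ ≤ r⁻¹ * (K * r ^ κ + N) := by gcongr
    _ = r ^ (κ - 1) * K + r⁻¹ * N := by rw [Real.rpow_sub_one hr.ne']; ring

theorem interior_derivative_bound_general (d : ℕ) (D : Set (ℝ × (Fin d → ℝ)))
    (r₀ β : ℝ)
    (hcone : ∀ r ∈ Set.Icc (0 : ℝ) r₀, ∀ z ∈ D, ∀ θ : Fin d → ℝ,
      ∃ y ∈ D, pdist z y = r ∧
        β * pdist z y * _root_.enorm θ ≤ |dotp θ (y.2 - z.2)|)
    (κ : ℝ)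
    (U : (ℝ × (Fin d → ℝ)) → (ℝ × (Fin d → ℝ)) → ℝ)
    (ν : (ℝ × (Fin d → ℝ)) → Fin d → ℝ)
    (KU NU r : ℝ)
    (hν : ∀ z ∈ D, ∀ z' ∈ D,
      |U z' z - dotp (ν z) (z.2 - z'.2)| ≤ KU * pdist z z' ^ κ)
    (hNU : ∀ z ∈ D, ∀ z' ∈ D, pdist z z' ≤ r → |U z' z| ≤ NU)
    (hr : 0 < r) (hrr₀ : r ≤ r₀) :
    ∀ z ∈ D, β * _root_.enorm (ν z) ≤ r ^ (κ - 1) * KU + r⁻¹ * NU := by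
  intro z hz
  obtain ⟨y, hy, hdist, hspread⟩ := hcone r ⟨hr.le, hrr₀⟩ z hz (ν z)
  have hosc : |dotp (ν z) (y.2 - z.2)| ≤ KU * r ^ κ + NU :=
    abs_dotp_le_of_abs_sub_le (hdist ▸ hν z hz y hy) (hNU z hz y hy hdist.le)
  refine le_rpow_sub_one_mul_add_inv_mul_of_mul_le hr ?_
  calc r * (β * _root_.enorm (ν z)) = β * pdist z y * _root_.enorm (ν z) := by rw [hdist]; ring
    _ ≤ KU * r ^ κ + NU := hspread.trans hosc

/-- interior derivative bound from Hölder control: if `D`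
satisfies a spatial interior cone condition with parameters `r₀ > 0`, `β ∈ (0,1)`,
`κ > 1`, and `U` is a two-variable function on `D × D` admitting, at every
base point `z ∈ D`, a "generalised gradient" `ν(z)` with
`|U(z̄,z) - ν(z)·(x - x̄)| ≤ K_U d(z,z̄)^κ`, then for every `r ∈ (0, r₀]` and
every `z ∈ D`, `β ‖ν(z)‖ ≤ r^{κ-1} K_U + r⁻¹ ‖U‖_{D,r}`. -/
theorem interior_derivative_bound (d : ℕ) (D : Set (ℝ × (Fin d → ℝ)))
    (r₀ β : ℝ) (hr₀ : 0 < r₀) (hβ0 : 0 < β) (hβ1 : β < 1)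
    (hcone : ∀ r ∈ Set.Icc (0 : ℝ) r₀, ∀ z ∈ D, ∀ θ : Fin d → ℝ,
      ∃ y ∈ D, pdist z y = r ∧
        β * pdist z y * _root_.enorm θ ≤ |dotp θ (y.2 - z.2)|)
    (κ : ℝ) (hκ : 1 < κ)
    (U : (ℝ × (Fin d → ℝ)) → (ℝ × (Fin d → ℝ)) → ℝ)
    (ν : (ℝ × (Fin d → ℝ)) → Fin d → ℝ)
    (KU NU r : ℝ)
    (hν : ∀ z ∈ D, ∀ z' ∈ D,
      |U z' z - dotp (ν z) (z.2 - z'.2)| ≤ KU * pdist z z' ^ κ)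
    (hNU : ∀ z ∈ D, ∀ z' ∈ D, pdist z z' ≤ r → |U z' z| ≤ NU)
    (hr : 0 < r) (hrr₀ : r ≤ r₀) :
    ∀ z ∈ D, β * _root_.enorm (ν z) ≤ r ^ (κ - 1) * KU + r⁻¹ * NU :=
  interior_derivative_bound_general d D r₀ β hcone κ U ν KU NU r hν hNU hr hrr₀
end
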